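/- arXiv:1302.4415 — 5 statements merged into one kernel-verified Lean document; each statement's English description precedes it below -/
import Mathlib

section
/- Let A be a V×V matrix over a field and let X ⊆ V be such that A[X] is nonsingular. Then −((A*X)ᵀ) = (−Aᵀ)*X. In particular, if A is skew-symmetric then the principal pivot transform A*X is skew-symmetric. -/
open Matrix
open scoped symmDiff

variable {V : Type} [Fintype V] [DecidableEq V] {F : Type} [Field F]

/-- principal submatrix of `A` indexed by `X` -/
def pSub (A : Matrix V V F) (X : Finset V) : Matrix X X F :=
  Matrix.of fun i j => A i.1 j.1

/-- principal pivot transform of `A` on `X` -/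
noncomputable def ppt (A : Matrix V V F) (X : Finset V) : Matrix V V F :=
  let P : Matrix X X F := Matrix.of fun i j => A i.1 j.1
  let Q : Matrix X {a // a ∉ X} F := Matrix.of fun i j => A i.1 j.1
  let R : Matrix {a // a ∉ X} X F := Matrix.of fun i j => A i.1 j.1
  let S : Matrix {a // a ∉ X} {a // a ∉ X} F := Matrix.of fun i j => A i.1 j.1
  fun i j =>
    if hi : i ∈ X then
      if hj : j ∈ X then P⁻¹ ⟨i, hi⟩ ⟨j, hj⟩
      else (-(P⁻¹ * Q)) ⟨i, hi⟩ ⟨j, hj⟩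
    else
      if hj : j ∈ X then (R * P⁻¹) ⟨i, hi⟩ ⟨j, hj⟩
      else (S - R * P⁻¹ * Q) ⟨i, hi⟩ ⟨j, hj⟩

/-!
In the block form of `A` with respect to `V = X ⊔ (V \ X)`, the blocks of `-Aᵀ` are
`-Pᵀ, -Rᵀ; -Qᵀ, -Sᵀ`. Since `(-Pᵀ)⁻¹ = -(P⁻¹)ᵀ`, each of the four pivot formulas for `-Aᵀ`
is the negated transpose of the corresponding formula for `A`, with the off-diagonal
blocks trading places exactly as transposition demands.
-/

namespace Matrix

variable {m n α : Type*} [Fintype m] [DecidableEq m] [CommRing α]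

theorem inv_neg (A : Matrix m m α) : (-A)⁻¹ = -A⁻¹ := by
  by_cases hA : IsUnit A.det
  · refine inv_eq_left_inv ?_
    rw [neg_mul_neg, nonsing_inv_mul A hA]
  · have hnA : ¬IsUnit (-A).det := by
      rw [det_neg]
      exact fun h => hA (isUnit_of_mul_isUnit_right h)
    rw [nonsing_inv_apply_not_isUnit A hA, nonsing_inv_apply_not_isUnit _ hnA, neg_zero]

theorem inv_neg_transpose (A : Matrix m m α) : (-Aᵀ)⁻¹ = -A⁻¹ᵀ := by
  rw [inv_neg, transpose_nonsing_inv]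

noncomputable def blockPivot (M : Matrix (m ⊕ n) (m ⊕ n) α) : Matrix (m ⊕ n) (m ⊕ n) α :=
  let P := M.toBlocks₁₁
  let Q := M.toBlocks₁₂
  let R := M.toBlocks₂₁
  let S := M.toBlocks₂₂
  fromBlocks P⁻¹ (-(P⁻¹ * Q)) (R * P⁻¹) (S - R * P⁻¹ * Q)

theorem blockPivot_neg_transpose (M : Matrix (m ⊕ n) (m ⊕ n) α) :
    blockPivot (-Mᵀ) = -(blockPivot M)ᵀ := by
  obtain ⟨P, Q, R, S, rfl⟩ : ∃ P Q R S, M = fromBlocks P Q R S :=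
    ⟨_, _, _, _, (fromBlocks_toBlocks M).symm⟩
  simp only [blockPivot, fromBlocks_transpose, fromBlocks_neg, toBlocks_fromBlocks₁₁,
    toBlocks_fromBlocks₁₂, toBlocks_fromBlocks₂₁, toBlocks_fromBlocks₂₂, inv_neg_transpose,
    transpose_neg, transpose_sub, transpose_mul, Matrix.neg_mul, Matrix.mul_neg, neg_neg,
    Matrix.mul_assoc]
  congr 1
  abel

end Matrix

theorem ppt_eq_submatrix_blockPivot {V : Type} [DecidableEq V] {F : Type} [Field F]
    (A : Matrix V V F) (X : Finset V) :
    ppt A X =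
      (blockPivot (A.submatrix (Equiv.sumCompl (· ∈ X)) (Equiv.sumCompl (· ∈ X)))).submatrix
        (Equiv.sumCompl (· ∈ X)).symm (Equiv.sumCompl (· ∈ X)).symm := by
  ext i j
  by_cases hi : i ∈ X <;> by_cases hj : j ∈ X <;>
    simp only [ppt, blockPivot, submatrix_apply, hi, hj, Equiv.sumCompl_symm_apply_of_pos,
      Equiv.sumCompl_symm_apply_of_neg, not_false_eq_true, dif_pos, dif_neg, fromBlocks_apply₁₁,
      fromBlocks_apply₁₂, fromBlocks_apply₂₁, fromBlocks_apply₂₂] <;> rfl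

theorem ppt_neg_transpose_general (A : Matrix V V F) (X : Finset V) :
    (-(ppt A X)ᵀ = ppt (-Aᵀ) X) ∧ (-Aᵀ = A → -(ppt A X)ᵀ = ppt A X) := by
  have neg_transpose_ppt : -(ppt A X)ᵀ = ppt (-Aᵀ) X := by
    rw [ppt_eq_submatrix_blockPivot, ppt_eq_submatrix_blockPivot, transpose_submatrix]
    exact congrArg (submatrix · _ _) (blockPivot_neg_transpose _).symm
  exact ⟨neg_transpose_ppt, fun hA => by rwa [hA] at neg_transpose_ppt⟩

/-- −((A*X)ᵀ) = (−Aᵀ)*X; in particular if A is skew-symmetric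
then so is A*X. -/
theorem ppt_neg_transpose (A : Matrix V V F) (X : Finset V)
    (hX : (pSub A X).det ≠ 0) :
    (-(ppt A X)ᵀ = ppt (-Aᵀ) X) ∧ (-Aᵀ = A → -(ppt A X)ᵀ = ppt A X) :=
  ppt_neg_transpose_general A X
end

section
/- On a set system M over ground set V and element u ∈ V, the pivot operation M*u and the loop complementation operation M+u are both involutions, and they generate a group of operations isomorphic to the symmetric group S₃; in particular (+u)(*u)(+u) = (*u)(+u)(*u). -/
open scoped symmDiff

variable {V : Type} [Fintype V] [DecidableEq V]

/-- pivot (twist) of a set system on `X` -/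
def pivotOp (E : Finset (Finset V)) (X : Finset V) : Finset (Finset V) :=
  E.image (fun Y => Y ∆ X)

/-- loop complementation of a set system on `u` -/
def loopC (E : Finset (Finset V)) (u : V) : Finset (Finset V) :=
  E ∆ ((E.filter (fun Y => u ∉ Y)).image (fun Y => insert u Y))

/-- the dual pivot ∂u = +u *u +u -/
def dualPivot (E : Finset (Finset V)) (u : V) : Finset (Finset V) :=
  loopC (pivotOp (loopC E u) {u}) u

/-!
Both operations only see, for each `Z` with `u ∉ Z`, the two memberships `Z ∈ E` and
`Z ∪ {u} ∈ E`: the pivot `*u` swaps them, and `+u` replaces the second by its exclusive or with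
the first. So both are involutions and the braid relation `+u *u +u = *u +u *u` is an identity
of propositional logic. Two involutions `p, l` satisfying the braid relation generate a group
with at most the six elements `1, p, l, pl, lp, plp`. On the three set systems `{{u}}`, `{∅}`,
`{∅, {u}}` the operations `*u` and `+u` act as two different transpositions, which generate `S₃`;
so the group maps onto `S₃` and is therefore isomorphic to it.
-/

open Equiv MulAction
open scoped Pointwise

namespace Finset

variable {α : Type*} [DecidableEq α] {a : α} {s : Finset α}

theorem symmDiff_singleton_of_notMem (h : a ∉ s) : s ∆ {a} = insert a s := by
  rw [(disjoint_singleton_right.2 h).symmDiff_eq_sup, sup_eq_union, union_comm, ← insert_eq]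

theorem insert_symmDiff_singleton_of_notMem (h : a ∉ s) : insert a s ∆ {a} = s := by
  rw [← symmDiff_singleton_of_notMem h, symmDiff_symmDiff_cancel_right]

theorem family_ext_of_insert (a : α) {E F : Finset (Finset α)}
    (h₀ : ∀ s, a ∉ s → (s ∈ E ↔ s ∈ F))
    (h₁ : ∀ s, a ∉ s → (insert a s ∈ E ↔ insert a s ∈ F)) : E = F := by
  ext t
  by_cases ht : a ∈ t
  · rw [← insert_erase ht]
    exact h₁ _ (notMem_erase a t)
  · exact h₀ t ht

end Finset

open Finset

section SetSystem

variable {α : Type} [DecidableEq α] {E : Finset (Finset α)} {u : α} {Z : Finset α}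

theorem mem_pivotOp {X Y : Finset α} : Y ∈ pivotOp E X ↔ Y ∆ X ∈ E := by
  simp only [pivotOp, mem_image]
  refine ⟨?_, fun h => ⟨Y ∆ X, h, symmDiff_symmDiff_cancel_right X Y⟩⟩
  rintro ⟨W, hW, rfl⟩
  rwa [symmDiff_symmDiff_cancel_right]

theorem mem_pivotOp_singleton (hZ : u ∉ Z) : Z ∈ pivotOp E {u} ↔ insert u Z ∈ E := by
  rw [mem_pivotOp, symmDiff_singleton_of_notMem hZ]

theorem insert_mem_pivotOp_singleton (hZ : u ∉ Z) : insert u Z ∈ pivotOp E {u} ↔ Z ∈ E := by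
  rw [mem_pivotOp, insert_symmDiff_singleton_of_notMem hZ]

theorem mem_loopC_of_notMem (hZ : u ∉ Z) : Z ∈ loopC E u ↔ Z ∈ E := by
  have : Z ∉ (E.filter (u ∉ ·)).image (insert u) := fun h => by
    obtain ⟨W, -, rfl⟩ := mem_image.1 h
    exact hZ (mem_insert_self u W)
  rw [loopC, mem_symmDiff]
  tauto

theorem insert_mem_loopC (hZ : u ∉ Z) :
    insert u Z ∈ loopC E u ↔ (insert u Z ∈ E ↔ Z ∉ E) := by
  have : insert u Z ∈ (E.filter (u ∉ ·)).image (insert u) ↔ Z ∈ E := by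
    simp only [mem_image, mem_filter]
    refine ⟨?_, fun h => ⟨Z, ⟨h, hZ⟩, rfl⟩⟩
    rintro ⟨W, ⟨hW, hu⟩, h⟩
    rwa [← erase_insert hZ, ← h, erase_insert hu]
  rw [loopC, mem_symmDiff, this]
  tauto

theorem pivotOp_involutive (X : Finset α) : Function.Involutive (pivotOp · X) := fun E => by
  ext Y
  rw [mem_pivotOp, mem_pivotOp, symmDiff_symmDiff_cancel_right]

theorem loopC_involutive (u : α) : Function.Involutive (loopC · u) := fun E =>
  family_ext_of_insert u
    (fun Z hZ => by simp only [mem_loopC_of_notMem hZ])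
    (fun Z hZ => by simp only [insert_mem_loopC hZ, mem_loopC_of_notMem hZ]; tauto)

theorem loopC_pivotOp_loopC (E : Finset (Finset α)) (u : α) :
    loopC (pivotOp (loopC E u) {u}) u = pivotOp (loopC (pivotOp E {u}) u) {u} := by
  refine family_ext_of_insert u (fun Z hZ => ?_) (fun Z hZ => ?_) <;>
  · simp only [mem_loopC_of_notMem hZ, insert_mem_loopC hZ, mem_pivotOp_singleton hZ,
      insert_mem_pivotOp_singleton hZ]
    tauto

def pivotLoopOrbit (u : α) : Fin 3 → Finset (Finset α) := ![{{u}}, {∅}, {∅, {u}}]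

-- The three families are told apart by whether they contain `∅` and `{u}`.
theorem pivotLoopOrbit_injective (u : α) : Function.Injective (pivotLoopOrbit u) := by
  intro i j h
  fin_cases i <;> fin_cases j <;>
    first
    | rfl
    | simpa [pivotLoopOrbit] using congrArg (∅ ∈ ·) h
    | simpa [pivotLoopOrbit] using congrArg ({u} ∈ ·) h

theorem pivotOp_comp_pivotLoopOrbit (u : α) :
    (pivotOp · {u}) ∘ pivotLoopOrbit u = pivotLoopOrbit u ∘ swap 0 1 := by
  funext i
  fin_cases i <;> simp [pivotLoopOrbit, pivotOp, swap_apply_of_ne_of_ne, pair_comm, ← bot_eq_empty]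

theorem loopC_comp_pivotLoopOrbit (u : α) :
    (loopC · u) ∘ pivotLoopOrbit u = pivotLoopOrbit u ∘ swap 1 2 := by
  funext i
  fin_cases i <;>
    simp [pivotLoopOrbit, loopC, swap_apply_of_ne_of_ne, filter_insert, filter_singleton, symmDiff_of_ge,
      (disjoint_singleton.2 (singleton_ne_empty u).symm).symmDiff_eq_sup]

end SetSystem

section BraidedInvolutions

variable {G : Type*} [Group G] {p l : G}

theorem closure_pair_subset_of_braid (hp : p * p = 1) (hl : l * l = 1)
    (hbr : l * p * l = p * l * p) :
    (Subgroup.closure {p, l} : Set G) ⊆ {1, p, l, p * l, l * p, p * l * p} := by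
  have hpp : ∀ x, x * p * p = x := fun x => by rw [mul_assoc, hp, mul_one]
  have hmul : ∀ x ∈ ({p, l} : Set G), ∀ y ∈ ({1, p, l, p * l, l * p, p * l * p} : Set G),
      x * y ∈ ({1, p, l, p * l, l * p, p * l * p} : Set G) := by
    rintro x (rfl | rfl) y (rfl | rfl | rfl | rfl | rfl | rfl) <;>
      simp [← mul_assoc, hp, hl, hpp, hbr]
  intro g hg
  induction hg using Subgroup.closure_induction_left with
  | one => simp
  | mul_left x hx y _ ih => exact hmul x hx y ih
  | inv_mul_cancel x hx y _ ih =>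
    obtain rfl | rfl := hx
    · rw [inv_eq_of_mul_eq_one_right hp]
      exact hmul _ (by simp) y ih
    · rw [inv_eq_of_mul_eq_one_right hl]
      exact hmul _ (by simp) y ih

theorem nonempty_closure_pair_mulEquiv_of_surjective (hp : p * p = 1) (hl : l * l = 1)
    (hbr : l * p * l = p * l * p) {H : Type*} [Group H] [Finite H] (hH : Nat.card H = 6)
    (f : Subgroup.closure {p, l} →* H) (hf : Function.Surjective f) :
    Nonempty (Subgroup.closure {p, l} ≃* H) := by
  classical
  have hsub := closure_pair_subset_of_braid hp hl hbr
  have : Finite (Subgroup.closure {p, l}) := ((Set.toFinite _).subset hsub).to_subtype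
  have hcard : Nat.card (Subgroup.closure {p, l}) ≤ 6 := by
    rw [← SetLike.coe_sort_coe, Nat.card_coe_set_eq]
    refine (Set.ncard_le_ncard hsub (Set.toFinite _)).trans ?_
    rw [Set.ncard_eq_toFinset_card']
    simpa using Finset.card_le_six
  refine ⟨MulEquiv.ofBijective f ((Nat.bijective_iff_surjective_and_card f).2 ⟨hf, ?_⟩)⟩
  exact le_antisymm (hcard.trans hH.ge) (Nat.card_le_card_of_surjective f hf)

end BraidedInvolutions

theorem Equiv.Perm.closure_swap_zero_one_swap_one_two :
    Subgroup.closure {swap (0 : Fin 3) 1, swap 1 2} = ⊤ := by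
  refine top_unique ?_
  rw [← Subgroup.closure_eq_top_of_mclosure_eq_top (Perm.mclosure_swap_castSucc_succ 2)]
  refine Subgroup.closure_mono ?_
  rintro _ ⟨i, rfl⟩
  fin_cases i <;> simp

section RangeAction

variable {X ι : Type*} {T : ι → X}

noncomputable def stabilizerRangePermHom (hT : Function.Injective T) :
    stabilizer (Perm X) (Set.range T) →* Perm ι :=
  (ofInjective T hT).symm.permCongrHom.toMonoidHom.comp (toPermHom _ _)

theorem apply_stabilizerRangePermHom (hT : Function.Injective T)
    (g : stabilizer (Perm X) (Set.range T)) (i : ι) :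
    T (stabilizerRangePermHom hT g i) = (g : Perm X) (T i) := by
  simp only [stabilizerRangePermHom, MonoidHom.coe_comp, Function.comp_apply,
    MulEquiv.coe_toMonoidHom, permCongrHom_coe, permCongr_apply, symm_symm, toPermHom_apply,
    toPerm_apply, apply_ofInjective_symm]
  rfl

theorem mem_stabilizer_range_of_comp_eq {g : Perm X} {σ : Perm ι} (h : ⇑g ∘ T = T ∘ σ) :
    g ∈ stabilizer (Perm X) (Set.range T) := by
  rw [mem_stabilizer_iff, Set.smul_set_range]
  simp only [Perm.smul_def]
  rw [← Function.comp_def, h, EquivLike.range_comp]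

theorem stabilizerRangePermHom_of_comp_eq (hT : Function.Injective T) {g : Perm X}
    {σ : Perm ι} (h : ⇑g ∘ T = T ∘ σ) :
    stabilizerRangePermHom hT ⟨g, mem_stabilizer_range_of_comp_eq h⟩ = σ :=
  Equiv.ext fun i => hT <| (apply_stabilizerRangePermHom hT _ i).trans (congrFun h i)

theorem nonempty_closure_pair_mulEquiv_perm_fin_three {p l : Perm X} (hp : p * p = 1)
    (hl : l * l = 1) (hbr : l * p * l = p * l * p) {T : Fin 3 → X}
    (hT : Function.Injective T) (hpT : ⇑p ∘ T = T ∘ swap 0 1) (hlT : ⇑l ∘ T = T ∘ swap 1 2) :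
    Nonempty (Subgroup.closure {p, l} ≃* Perm (Fin 3)) := by
  have hle : Subgroup.closure {p, l} ≤ stabilizer (Perm X) (Set.range T) := by
    rw [Subgroup.closure_le]
    rintro _ (rfl | rfl)
    exacts [mem_stabilizer_range_of_comp_eq hpT, mem_stabilizer_range_of_comp_eq hlT]
  refine nonempty_closure_pair_mulEquiv_of_surjective hp hl hbr (by rw [Nat.card_perm, Nat.card_fin]; rfl)
    ((stabilizerRangePermHom hT).comp (Subgroup.inclusion hle)) ?_
  rw [← MonoidHom.range_eq_top, eq_top_iff, ← Perm.closure_swap_zero_one_swap_one_two,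
    Subgroup.closure_le]
  rintro _ (rfl | rfl)
  · exact ⟨⟨p, Subgroup.subset_closure (by simp)⟩, stabilizerRangePermHom_of_comp_eq hT hpT⟩
  · exact ⟨⟨l, Subgroup.subset_closure (by simp)⟩, stabilizerRangePermHom_of_comp_eq hT hlT⟩

end RangeAction

/-- pivot *u and loop complementation +u are involutions
generating a group isomorphic to S₃; in particular +u*u+u = *u+u*u. -/
theorem pivot_loopC_generate_S3 (u : V) :
    ∃ p l : Equiv.Perm (Finset (Finset V)),
      (∀ E, p E = pivotOp E {u}) ∧ (∀ E, l E = loopC E u) ∧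
      p * p = 1 ∧ l * l = 1 ∧
      (∀ E : Finset (Finset V),
        loopC (pivotOp (loopC E u) {u}) u = pivotOp (loopC (pivotOp E {u}) u) {u}) ∧
      Nonempty ((Subgroup.closure {p, l} : Subgroup (Equiv.Perm (Finset (Finset V))))
        ≃* Equiv.Perm (Fin 3)) := by
  let p := (pivotOp_involutive {u}).toPerm _
  let l := (loopC_involutive u).toPerm _
  have hp : p * p = 1 := Equiv.ext (pivotOp_involutive {u})
  have hl : l * l = 1 := Equiv.ext (loopC_involutive u)
  have hbr : l * p * l = p * l * p := Equiv.ext (loopC_pivotOp_loopC · u)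
  refine ⟨p, l, fun _ => rfl, fun _ => rfl, hp, hl, (loopC_pivotOp_loopC · u), ?_⟩
  exact nonempty_closure_pair_mulEquiv_perm_fin_three hp hl hbr (pivotLoopOrbit_injective u)
    (pivotOp_comp_pivotLoopOrbit u) (loopC_comp_pivotLoopOrbit u)
end

section
/- Let M = (V,E) be a set system. Then X ∈ M+V if and only if the number of sets Z ∈ E with Z ⊆ X is odd. -/
open scoped symmDiff

variable {V : Type} [Fintype V] [DecidableEq V]

/-!
Membership in `E+u` is the parity `[X ∈ E] + [u ∈ X][X - u ∈ E]`. Inductively, once `+u` has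
been applied for all `u ∈ S`, a set `X` is a member iff an odd number of `Z ∈ E` satisfy
`X \ S ⊆ Z ⊆ X`: for `u ∈ X \ S`, the `Z` with `X \ (S ∪ {u}) ⊆ Z ⊆ X` split, according to
whether `u ∈ Z`, into those with `X \ S ⊆ Z ⊆ X` and those with `(X - u) \ S ⊆ Z ⊆ X - u`.
For `S = V` the condition is just `Z ⊆ X`.
-/

namespace Finset

variable {α : Type*} [DecidableEq α]

theorem card_filter_interval_insert (E : Finset (Finset α)) {S X : Finset α} {u : α}
    (huS : u ∉ S) (huX : u ∈ X) :
    #{Z ∈ E | X \ insert u S ⊆ Z ∧ Z ⊆ X} =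
      #{Z ∈ E | X \ S ⊆ Z ∧ Z ⊆ X} + #{Z ∈ E | X.erase u \ S ⊆ Z ∧ Z ⊆ X.erase u} := by
  rw [← card_filter_add_card_filter_not (p := (u ∈ ·)), filter_filter, filter_filter]
  congr 2
  · refine filter_congr fun Z _ => ?_
    simp only [subset_iff, mem_sdiff, mem_insert]
    grind
  · refine filter_congr fun Z _ => ?_
    simp only [subset_iff, mem_sdiff, mem_insert, mem_erase]
    grind

end Finset

open Finset

section

variable {α : Type} [DecidableEq α]

theorem mem_loopC_iff {E : Finset (Finset α)} {u : α} {X : Finset α} :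
    X ∈ loopC E u ↔ Xor (X ∈ E) (u ∈ X ∧ X.erase u ∈ E) := by
  have mem_image_insert : X ∈ {Y ∈ E | u ∉ Y}.image (insert u) ↔ u ∈ X ∧ X.erase u ∈ E := by
    constructor
    · intro h
      obtain ⟨Y, hY, rfl⟩ := mem_image.mp h
      obtain ⟨hYE, huY⟩ := mem_filter.mp hY
      simpa [erase_insert huY] using hYE
    · rintro ⟨huX, hXE⟩
      exact mem_image.mpr ⟨X.erase u, mem_filter.mpr ⟨hXE, notMem_erase u X⟩, insert_erase huX⟩
  rw [loopC, mem_symmDiff, mem_image_insert]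
  rfl

theorem mem_foldl_loopC_iff (E : Finset (Finset α)) (l : List α) (hl : l.Nodup) (X : Finset α) :
    X ∈ l.foldl loopC E ↔ Odd #{Z ∈ E | X \ l.toFinset ⊆ Z ∧ Z ⊆ X} := by
  induction l using List.reverseRecOn generalizing X with
  | nil =>
    simp only [List.foldl_nil, List.toFinset_nil, sdiff_empty, ← subset_antisymm_iff, filter_eq]
    split_ifs with hX <;> simp [hX]
  | append_singleton l u ih =>
    obtain ⟨hul, hl⟩ : u ∉ l ∧ l.Nodup := List.nodup_cons.mp (List.nodup_append_comm.mp hl)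
    rw [List.foldl_append, List.foldl_cons, List.foldl_nil, mem_loopC_iff, ih hl, ih hl,
      List.toFinset_append, List.toFinset_cons, List.toFinset_nil, union_insert, union_empty]
    by_cases huX : u ∈ X
    · rw [card_filter_interval_insert E (mt List.mem_toFinset.mp hul) huX, Nat.odd_add,
        ← Nat.not_odd_iff_even, ← xor_iff_iff_not, and_iff_right huX]
    · rw [sdiff_insert_of_notMem huX]
      simp only [huX, false_and, xor_comm _ False, xor_false, id]

end

/-- X ∈ M+V iff the number of Z ∈ E with Z ⊆ X is odd.
M+V is obtained by applying +u for every u ∈ V, in any order. -/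
theorem mem_loopC_univ_iff (E : Finset (Finset V)) (X : Finset V)
    (l : List V) (hnd : l.Nodup) (huniv : l.toFinset = Finset.univ) :
    X ∈ l.foldl loopC E ↔ Odd (E.filter (fun Z => Z ⊆ X)).card := by
  rw [mem_foldl_loopC_iff E l hnd, huniv]
  simp
end

section
/- Let α be an automorphism of a field F and let A be an α-symmetric V×V matrix over F. Then the set system M_A = (V, {X ⊆ V : A[X] is nonsingular}) is a delta-matroid, i.e., it is nonempty and satisfies the symmetric exchange axiom. -/
open Matrix
open scoped symmDiff

variable {V : Type} [Fintype V] [DecidableEq V] {F : Type} [Field F]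

open scoped Classical in
/-- the set system of index sets of nonsingular principal submatrices of A -/
noncomputable def MA (A : Matrix V V F) : Finset (Finset V) :=
  Finset.univ.filter (fun X => (pSub A X).det ≠ 0)

/-- a delta-matroid: a nonempty set system satisfying symmetric exchange -/
def IsDeltaMatroid (E : Finset (Finset V)) : Prop :=
  E.Nonempty ∧ ∀ X ∈ E, ∀ Y ∈ E, ∀ u ∈ X ∆ Y,
    X ∆ ({u} : Finset V) ∈ E ∨ ∃ v ∈ X ∆ Y, v ≠ u ∧ X ∆ ({u, v} : Finset V) ∈ E

/-!
Write `N_X` for the matrix whose `j`-th column is the `j`-th column of `A` if `j ∈ X` and the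
`j`-th unit vector otherwise, so that `det N_X = det A[X]`. If `A[X]` is nonsingular, the matrix
`G = N_X⁻¹ N_{Xᶜ}` satisfies `det A[X ∆ S] = det A[X] · det G[S]` for every `S`, and `G` is again
α-symmetric. Hence the exchange axiom at `X` reduces to the exchange axiom for `M_G` at `∅`:
if `G[T]` is nonsingular and `u ∈ T`, some `G u v` with `v ∈ T` is nonzero; either `G u u ≠ 0`,
or `G v u ≠ 0` by α-symmetry and `det G[{u, v}] = -G u v · G v u ≠ 0`.
-/

open Finset

/-- The matrix whose `j`-th column is that of `C` for `j ∈ S` and that of `N` otherwise. -/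
def colMix (N C : Matrix V V F) (S : Finset V) : Matrix V V F :=
  of fun i j => if j ∈ S then C i j else N i j

lemma mul_colMix (N M C : Matrix V V F) (S : Finset V) :
    N * colMix M C S = colMix (N * M) (N * C) S := by
  ext i j
  by_cases hj : j ∈ S <;> simp [colMix, mul_apply, hj]

omit [Fintype V] in
lemma colMix_colMix_one_symmDiff (A : Matrix V V F) (X S : Finset V) :
    colMix (colMix 1 A X) (colMix A 1 X) S = colMix 1 A (X ∆ S) := by
  ext i j
  by_cases hjS : j ∈ S <;> by_cases hjX : j ∈ X <;> simp [colMix, hjS, hjX, mem_symmDiff]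

lemma det_colMix_one (B : Matrix V V F) (S : Finset V) :
    (colMix 1 B S).det = (pSub B S).det := by
  have hblocks : (colMix 1 B S).submatrix (Equiv.sumCompl (· ∈ S)) (Equiv.sumCompl (· ∈ S)) =
      fromBlocks (pSub B S) 0 (of fun (i : {a // a ∉ S}) (j : S) => B i j) 1 := by
    ext (i | i) (j | j)
    · simp [colMix, pSub, j.2]
    · simp [colMix, pSub, one_apply, j.2, ne_of_mem_of_not_mem i.2 j.2]
    · simp [colMix, pSub, j.2]
    · simp [colMix, pSub, one_apply, j.2, Subtype.ext_iff]
  rw [← det_submatrix_equiv_self (Equiv.sumCompl (· ∈ S)), hblocks, det_fromBlocks_zero₁₂,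
    det_one, mul_one]

lemma colMix_mul_map_transpose_add (f : F → F) (N C : Matrix V V F) (S : Finset V) :
    colMix N C S * (colMix C N S)ᵀ.map f + colMix C N S * (colMix N C S)ᵀ.map f =
      C * Nᵀ.map f + N * Cᵀ.map f := by
  ext i k
  simp only [Matrix.add_apply, mul_apply, ← sum_add_distrib]
  refine sum_congr rfl fun j _ => ?_
  by_cases hj : j ∈ S <;> simp [colMix, hj, add_comm]

def IsAlphaSymmetric (σ : F →+* F) (A : Matrix V V F) : Prop :=
  (-Aᵀ).map σ = A

lemma isAlphaSymmetric_inv_mul (σ : F →+* F) {N M : Matrix V V F} (hN : IsUnit N.det)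
    (h : N * Mᵀ.map σ + M * Nᵀ.map σ = 0) :
    IsAlphaSymmetric σ (N⁻¹ * M) := by
  have hM : Mᵀ.map σ = -(N⁻¹ * M * Nᵀ.map σ) :=
    calc Mᵀ.map σ = N⁻¹ * (N * Mᵀ.map σ) := by
          rw [← Matrix.mul_assoc, nonsing_inv_mul _ hN, Matrix.one_mul]
      _ = -(N⁻¹ * M * Nᵀ.map σ) := by
          rw [eq_neg_of_add_eq_zero_left h, Matrix.mul_neg, Matrix.mul_assoc]
  have hinv : Nᵀ.map σ * N⁻¹ᵀ.map σ = 1 := by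
    rw [← Matrix.map_mul, ← transpose_mul, nonsing_inv_mul _ hN, transpose_one,
      Matrix.map_one _ σ.map_zero σ.map_one]
  rw [IsAlphaSymmetric, Matrix.map_neg _ σ.map_neg, transpose_mul, Matrix.map_mul, hM,
    Matrix.neg_mul, neg_neg, Matrix.mul_assoc, hinv, Matrix.mul_one]

/-- Up to the signs of its two off-diagonal blocks, this is the principal pivot transform
`A * X`. -/
noncomputable def pivot (A : Matrix V V F) (X : Finset V) : Matrix V V F :=
  (colMix 1 A X)⁻¹ * colMix A 1 X

lemma det_pSub_symmDiff {A : Matrix V V F} {X : Finset V} (hX : (pSub A X).det ≠ 0)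
    (S : Finset V) : (pSub A (X ∆ S)).det = (pSub A X).det * (pSub (pivot A X) S).det := by
  have hN : IsUnit (colMix 1 A X).det := by rw [det_colMix_one]; exact hX.isUnit
  rw [← det_colMix_one, ← det_colMix_one, ← det_colMix_one, ← det_mul, mul_colMix,
    Matrix.mul_one, pivot, ← Matrix.mul_assoc, mul_nonsing_inv _ hN, Matrix.one_mul,
    colMix_colMix_one_symmDiff]

lemma IsAlphaSymmetric.pivot {σ : F →+* F} {A : Matrix V V F} (hA : IsAlphaSymmetric σ A)
    {X : Finset V} (hX : (pSub A X).det ≠ 0) : IsAlphaSymmetric σ (pivot A X) := by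
  have hN : IsUnit (colMix 1 A X).det := by rw [det_colMix_one]; exact hX.isUnit
  have hAσ : Aᵀ.map σ = -A := by
    conv_rhs => rw [← hA]
    rw [Matrix.map_neg _ σ.map_neg, neg_neg]
  refine isAlphaSymmetric_inv_mul σ hN ?_
  rw [colMix_mul_map_transpose_add, transpose_one, Matrix.map_one _ σ.map_zero σ.map_one,
    Matrix.mul_one, Matrix.one_mul, hAσ, add_neg_cancel]

omit [Fintype V] in
lemma det_pSub_singleton (B : Matrix V V F) (u : V) : (pSub B {u}).det = B u u := by
  rw [det_unique, pSub, of_apply, mem_singleton.1 (default : ({u} : Finset V)).2]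

omit [Fintype V] in
lemma det_pSub_pair (B : Matrix V V F) {u v : V} (huv : u ≠ v) :
    (pSub B {u, v}).det = B u u * B v v - B u v * B v u := by
  let e : Fin 2 ≃ ({u, v} : Finset V) :=
    Equiv.ofBijective ![⟨u, by simp⟩, ⟨v, by simp⟩] <|
      (Fintype.bijective_iff_injective_and_card _).2
        ⟨by intro a b; fin_cases a <;> fin_cases b <;> simp [huv, huv.symm],
          by rw [Fintype.card_fin, Fintype.card_coe, card_pair huv]⟩
  rw [← det_submatrix_equiv_self e, det_fin_two]
  rfl

omit [Fintype V] in
lemma IsAlphaSymmetric.det_pSub_singleton_ne_zero_or_exists_pair {σ : F →+* F}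
    {G : Matrix V V F} (hG : IsAlphaSymmetric σ G) {T : Finset V} (hT : (pSub G T).det ≠ 0)
    {u : V} (hu : u ∈ T) :
    (pSub G {u}).det ≠ 0 ∨ ∃ v ∈ T, v ≠ u ∧ (pSub G {u, v}).det ≠ 0 := by
  obtain ⟨v, huv⟩ : ∃ v : T, G u v ≠ 0 := by
    by_contra! h
    exact hT (det_eq_zero_of_row_eq_zero ⟨u, hu⟩ fun v => h v)
  rw [det_pSub_singleton]
  by_cases huu : G u u = 0
  · have hvu : G v u ≠ 0 := by
      rw [← hG, map_apply, neg_apply, transpose_apply, map_ne_zero σ]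
      exact neg_ne_zero.2 huv
    have hne : (v : V) ≠ u := fun h => huv (h ▸ huu)
    refine Or.inr ⟨v, v.2, hne, ?_⟩
    rw [det_pSub_pair G hne.symm, huu, zero_mul, zero_sub, neg_ne_zero]
    exact mul_ne_zero huv hvu
  · exact Or.inl huu

lemma mem_MA {A : Matrix V V F} {X : Finset V} : X ∈ MA A ↔ (pSub A X).det ≠ 0 := by
  simp [MA]

/-- if A is α-symmetric then M_A is a delta-matroid. -/
theorem MA_isDeltaMatroid (A : Matrix V V F) (α : F ≃+* F)
    (hA : ∀ i j, α (-(Aᵀ i j)) = A i j) :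
    IsDeltaMatroid (MA A) := by
  have hAα : IsAlphaSymmetric (α : F →+* F) A := by ext i j; exact hA i j
  refine ⟨⟨∅, mem_MA.2 (by simp [det_isEmpty])⟩, fun X hX Y hY u hu => ?_⟩
  rw [mem_MA] at hX hY
  have hXY : (pSub (pivot A X) (X ∆ Y)).det ≠ 0 := by
    have hY' := det_pSub_symmDiff hX (X ∆ Y)
    rw [symmDiff_symmDiff_cancel_left] at hY'
    exact right_ne_zero_of_mul (hY' ▸ hY)
  simp only [mem_MA, det_pSub_symmDiff hX, mul_ne_zero_iff_left hX]
  exact (hAα.pivot hX).det_pSub_singleton_ne_zero_or_exists_pair hXY hu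
end

section
/- Let A be a V×V matrix over GF(4) that is inv-symmetric, where inv is the unique nontrivial automorphism of GF(4) (the Frobenius x ↦ x²). Then A is principally unimodular: for every Y ⊆ V, det(A[Y]) ∈ {0, 1}. -/
open Matrix
open scoped symmDiff

variable {V : Type} [Fintype V] [DecidableEq V] {F : Type} [Field F]

/-!
The Frobenius map `x ↦ x²` of `GF(4)` is a ring endomorphism, and inv-symmetry of `A` says
`A = (Aᵀ).map frob`; this identity passes to every principal submatrix `B`. Since the
determinant commutes with ring homomorphisms and with transposition,
`frob (det B) = det ((Bᵀ).map frob) = det B`, i.e. `det B` is idempotent, hence `0` or `1`.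
-/

omit [Fintype V] [DecidableEq V] [Field F] in
lemma pSub_transpose (A : Matrix V V F) (X : Finset V) : (pSub A X)ᵀ = pSub Aᵀ X := rfl

omit [Fintype V] [DecidableEq V] in
lemma pSub_map (A : Matrix V V F) (X : Finset V) (f : F →+* F) :
    (pSub A X).map f = pSub (A.map f) X := rfl

lemma RingHom.map_det_of_transpose_map_eq {n R : Type*} [Fintype n] [DecidableEq n]
    [CommRing R] (f : R →+* R) {B : Matrix n n R} (hB : Bᵀ.map f = B) : f B.det = B.det := by
  calc f B.det = f Bᵀ.det := by rw [det_transpose]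
    _ = (Bᵀ.map f).det := f.map_det Bᵀ
    _ = B.det := by rw [hB]

/-- an inv-symmetric matrix over GF(4) is principally
unimodular: every principal minor lies in {0,1} (= {0,1,−1} since −1 = 1). -/
theorem invSymm_principally_unimodular
    (A : Matrix V V (GaloisField 2 2))
    (hA : ∀ i j, (-(Aᵀ i j)) ^ 2 = A i j) :
    ∀ Y : Finset V, (pSub A Y).det ∈ ({0, 1} : Set (GaloisField 2 2)) := by
  intro Y
  let frob := frobenius (GaloisField 2 2) 2
  have hA' : Aᵀ.map frob = A := by
    ext i j
    simpa only [map_apply, frob, frobenius_def, neg_sq] using hA i j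
  have hY : (pSub A Y)ᵀ.map frob = pSub A Y := by
    rw [pSub_transpose, pSub_map, hA']
  have hidem : (pSub A Y).det * (pSub A Y).det = (pSub A Y).det := by
    simpa only [frob, frobenius_def, sq] using frob.map_det_of_transpose_map_eq hY
  exact IsIdempotentElem.iff_eq_zero_or_one.mp hidem
end
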